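/- arXiv:2107.09774 — 2 statements merged into one kernel-verified Lean document; each statement's English description precedes it below -/
import Mathlib

section
/- Fix l ≥ 2 and A ≥ 0. For l-1 ≤ M < 2l-1 with N ≡ M mod 2, the weighted number of lattice paths from (-2Al, 0) to (M,N) subject to a type-1 filter at x=l-1 and a type-2 filter at x=2l-1 equals Σ_{k=A}^{⌊(N-l+1)/(2l)⌋} (-1)^{k-A} C(M+2kl, N) + Σ_{k=A}^{⌊N/(2l)-1⌋} (-1)^{k-A+1} C(M-2(k+2)l+2, N), where C(m,n) = binom(n,(n-m)/2). -/
open Finset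

/-- The x-coordinate after the first `k` steps of a path encoded by `s : Fin N → Bool`
(`true` = step `(x,y) → (x+1,y+1)`, `false` = step `(x,y) → (x-1,y+1)`), starting at `x = 0`. -/
def pathPos {N : ℕ} (s : Fin N → Bool) (k : ℕ) : ℤ :=
  ∑ i ∈ Finset.univ.filter (fun i : Fin N => (i : ℕ) < k), (if s i then (1 : ℤ) else -1)

/-- Binomial coefficient `binom n k` with integer lower argument, `0` out of range. -/
def ibinom (n : ℕ) (k : ℤ) : ℤ :=
  if 0 ≤ k then (n.choose k.toNat : ℤ) else 0


/-- The weight of a path starting at `x = x0`. -/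
def pathWeightFrom {N : ℕ} (x0 : ℤ) (w : ℤ → Bool → ℤ) (s : Fin N → Bool) : ℤ :=
  ∏ i : Fin N, w (x0 + pathPos s i.val) (s i)

/-- `C m n = binom n ((n-m)/2)`. -/
def C (m : ℤ) (n : ℕ) : ℤ := ibinom n (((n : ℤ) - m) / 2)

lemma ibinom_succ (N : ℕ) (j : ℤ) :
    ibinom (N+1) j = ibinom N j + ibinom N (j-1) := by
  unfold ibinom
  rcases lt_trichotomy j 0 with h | h | h
  · rw [if_neg (by omega), if_neg (by omega), if_neg (by omega)]; ring
  · subst h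
    rw [if_pos le_rfl, if_pos le_rfl, if_neg (by omega)]
    simp
  · rw [if_pos (by omega), if_pos (by omega), if_pos (by omega)]
    obtain ⟨k, rfl⟩ : ∃ k : ℕ, j = (k : ℤ) + 1 := ⟨(j-1).toNat, by omega⟩
    have h1 : ((k:ℤ)+1).toNat = k + 1 := by omega
    have h2 : ((k:ℤ)+1-1).toNat = k := by omega
    rw [h1, h2, Nat.choose_succ_succ']
    push_cast; ring

lemma ibinom_symm (N : ℕ) (j : ℤ) : ibinom N j = ibinom N ((N:ℤ) - j) := by
  unfold ibinom
  rcases lt_trichotomy j 0 with h | h | h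
  · rw [if_neg (by omega), if_pos (by omega)]
    have : N < ((N:ℤ) - j).toNat := by omega
    rw [Nat.choose_eq_zero_of_lt this]; simp
  · subst h; simp
  · rw [if_pos (by omega)]
    by_cases hj : j ≤ (N:ℤ)
    · rw [if_pos (by omega)]
      have h1 : ((N:ℤ) - j).toNat = N - j.toNat := by omega
      rw [h1, Nat.choose_symm (by omega)]
    · rw [if_neg (by omega), Nat.choose_eq_zero_of_lt (by omega)]; simp

lemma C_pascal {m : ℤ} {N : ℕ} (h : (2:ℤ) ∣ ((N:ℤ) + 1 + m)) :
    C m (N+1) = C (m-1) N + C (m+1) N := by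
  obtain ⟨e, he⟩ : ∃ e : ℤ, m = (N:ℤ) + 1 - 2*e := ⟨((N:ℤ)+1-m)/2, by omega⟩
  subst he
  unfold C
  have e1 : ((N:ℤ) + 1 - ((N:ℤ) + 1 - 2*e)) / 2 = e := by omega
  have e2 : ((N:ℤ) - ((N:ℤ) + 1 - 2*e - 1)) / 2 = e := by omega
  have e3 : ((N:ℤ) - ((N:ℤ) + 1 - 2*e + 1)) / 2 = e - 1 := by omega
  push_cast
  rw [e1, e2, e3]
  exact ibinom_succ N e

lemma C_symm {m : ℤ} (N : ℕ) (h : (2:ℤ) ∣ ((N:ℤ) + m)) : C (-m) N = C m N := by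
  obtain ⟨e, he⟩ : ∃ e : ℤ, m = (N:ℤ) - 2*e := ⟨((N:ℤ)-m)/2, by omega⟩
  subst he
  unfold C
  have e1 : ((N:ℤ) - ((N:ℤ) - 2*e)) / 2 = e := by omega
  have e2 : ((N:ℤ) - -((N:ℤ) - 2*e)) / 2 = (N:ℤ) - e := by omega
  rw [e1, e2, ibinom_symm N e]

lemma C_zero_big {m : ℤ} {N : ℕ} (h : (N:ℤ) < m) (hp : (2:ℤ) ∣ ((N:ℤ) + m)) :
    C m N = 0 := by
  unfold C ibinom
  rw [if_neg (by omega)]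

lemma C_zero_small {m : ℤ} {N : ℕ} (h : m < -(N:ℤ)) (hp : (2:ℤ) ∣ ((N:ℤ) + m)) :
    C m N = 0 := by
  unfold C ibinom
  rw [if_pos (by omega)]
  have : N < (((N:ℤ) - m)/2).toNat := by omega
  rw [Nat.choose_eq_zero_of_lt this]
  simp

lemma C_zero' {m : ℤ} (h : m ≠ 0) (hp : (2:ℤ) ∣ m) : C m 0 = 0 := by
  rcases lt_or_gt_of_ne h with h' | h'
  · exact C_zero_small (by push_cast; omega) (by push_cast; omega)
  · exact C_zero_big (by push_cast; omega) (by push_cast; omega)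

lemma C_zero_self : C 0 0 = 1 := by unfold C ibinom; norm_num

open Finset

section part2
variable (XC : ℤ → ℕ → ℤ)  -- stand-in for C in generic lemmas

/-- correction sequence -/
def gcor (l j : ℕ) : ℤ :=
  (if l ∣ j then (-1:ℤ)^(j/l) else 0) - (if l ∣ (j-1) then (-1:ℤ)^((j-1)/l) else 0)

/-- boundary coefficients -/
def vseq (l : ℕ) : ℕ → ℤ
  | 0 => 1
  | (j+1) => 3 * vseq l j + gcor l (j+1)

lemma telescope (f : ℕ → ℤ) (b : ℕ) :
    ∑ k ∈ range b, (-1:ℤ)^k * (f k + f (k+1)) = f 0 - (-1:ℤ)^b * f b := by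
  induction b with
  | zero => simp
  | succ b ih => rw [Finset.sum_range_succ, ih, pow_succ]; ring

/-- sum over multiples of l (j = k*l) -/
lemma sum_dvd_reindex (l : ℕ) (hl : 0 < l) (K : ℕ) (F : ℕ → ℤ) :
    ∑ j ∈ range (K*l), (if l ∣ j then (-1:ℤ)^(j/l) else 0) * F j
      = ∑ k ∈ range K, (-1:ℤ)^k * F (k*l) := by
  induction K with
  | zero => simp
  | succ K ih =>
    rw [Finset.sum_range_succ, ← ih, Nat.succ_mul, Finset.sum_range_add]
    congr 1
    have h0 : ∀ i ∈ range l, i ≠ 0 → (if l ∣ (K*l+i) then (-1:ℤ)^((K*l+i)/l) else 0) * F (K*l+i) = 0 := by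
      intro i hi hne
      rw [if_neg, zero_mul]
      simp only [Finset.mem_range] at hi
      rintro ⟨d, hd⟩
      have hc : K*l = l*K := Nat.mul_comm K l
      have hc2 : l*(K+1) = l*K + l := by ring
      rcases Nat.lt_or_ge d (K+1) with h | h
      · have : l * d ≤ l * K := Nat.mul_le_mul_left l (by omega)
        omega
      · have : l * (K+1) ≤ l * d := Nat.mul_le_mul_left l h
        omega
    rw [Finset.sum_eq_single_of_mem 0 (by simp [hl]) h0]
    have hdvd : l ∣ K*l + 0 := ⟨K, by ring⟩
    rw [if_pos hdvd]
    have h1 : (K*l + 0)/l = K := by rw [Nat.add_zero, Nat.mul_div_cancel _ hl]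
    rw [h1, Nat.add_zero]

/-- sum over j with l ∣ (j+1) -/
lemma sum_dvd_reindex' (l : ℕ) (hl : 0 < l) (K : ℕ) (F : ℕ → ℤ) :
    ∑ j ∈ range (K*l), (if l ∣ (j+1) then (-1:ℤ)^((j+1)/l) else 0) * F j
      = ∑ k ∈ range K, (-1:ℤ)^(k+1) * F ((k+1)*l - 1) := by
  induction K with
  | zero => simp
  | succ K ih =>
    rw [Finset.sum_range_succ, ← ih, Nat.succ_mul, Finset.sum_range_add]
    congr 1
    have h0 : ∀ i ∈ range l, i ≠ l - 1 → (if l ∣ (K*l+i+1) then (-1:ℤ)^((K*l+i+1)/l) else 0) * F (K*l+i) = 0 := by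
      intro i hi hne
      rw [if_neg, zero_mul]
      simp only [Finset.mem_range] at hi
      rintro ⟨d, hd⟩
      have hc : K*l = l*K := Nat.mul_comm K l
      have hc2 : l*(K+1) = l*K + l := by ring
      rcases Nat.lt_or_ge d (K+1) with h | h
      · have : l * d ≤ l * K := Nat.mul_le_mul_left l (by omega)
        omega
      · have : l * (K+1) ≤ l * d := Nat.mul_le_mul_left l h
        omega
    rw [Finset.sum_eq_single_of_mem (l-1) (by simp; omega) h0]
    have hdvd : l ∣ K*l + (l-1) + 1 := ⟨K+1, by cases l with | zero => omega | succ n => ring_nf; omega⟩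
    rw [if_pos hdvd]
    have h1 : (K*l + (l-1) + 1)/l = K + 1 := by
      have : K*l + (l-1) + 1 = (K+1)*l := by cases l with | zero => omega | succ n => ring_nf; omega
      rw [this, Nat.mul_div_cancel _ hl]
    have h2 : K * l + (l - 1) = (K+1)*l - 1 := by
      cases l with | zero => omega | succ n => ring_nf; omega
    rw [h1, h2]
    have h3 : (K+1)*l - 1 = K*l + l - 1 := by rw [Nat.succ_mul]
    rw [h3]
end part2

section filters
variable (l A : ℕ)

/-- middle-region sum -/
def T1 (t : ℤ) (N b : ℕ) : ℤ :=
  ∑ k ∈ range b, (-1:ℤ)^k *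
    (C (t + 2*((A:ℤ)+k)*l) N - C (t - 2*((A:ℤ)+k+2)*l + 2) N)

/-- right-region sum with coefficient stream w -/
def T2 (w : ℕ → ℤ) (t : ℤ) (N b : ℕ) : ℤ :=
  ∑ j ∈ range b, w j * C (t + 2*(A:ℤ)*l + 2*j) N

/-- the global closed form -/
def G (N : ℕ) (t : ℤ) : ℤ :=
  if t ≤ (l:ℤ) - 2 then
    C (t + 2*(A:ℤ)*l) N - C (2*((l:ℤ)-1) - t + 2*(A:ℤ)*l) N
  else if t ≤ 2*(l:ℤ) - 2 then T1 l A t N (N+1)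
  else if t = 2*(l:ℤ) - 1 then T2 l A (vseq l) t N (N+1)
  else T2 l A (fun j => 2 * vseq l j) t N (N+1)

variable {l A}

lemma kl_big {k N : ℕ} (hl : 2 ≤ l) (hk : N + 1 ≤ k) : (4:ℤ)*(N+1) ≤ 2*k*l := by
  have h1 : 2*(N+1) ≤ k * l := le_trans (by omega) (Nat.mul_le_mul hk hl)
  have : ((2*(N+1) : ℕ) : ℤ) ≤ ((k*l : ℕ) : ℤ) := by exact_mod_cast h1
  push_cast at this
  linarith

lemma T1_stab (hl : 2 ≤ l) {t : ℤ} (ht1 : (l:ℤ) - 1 ≤ t) (ht2 : t ≤ 2*(l:ℤ) - 2)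
    {N : ℕ} (hpar : (2:ℤ) ∣ (N:ℤ) - t) {b : ℕ} (hb : N + 1 ≤ b) :
    T1 l A t N b = T1 l A t N (N+1) := by
  unfold T1
  symm
  apply Finset.sum_subset (Finset.range_subset_range.2 (by omega))
  intro k hk hk'
  simp only [Finset.mem_range] at hk hk'
  have hkN : N + 1 ≤ k := by omega
  have hbig := kl_big hl hkN
  have hll : (2:ℤ) ≤ (l:ℤ) := by exact_mod_cast hl
  have hA : (0:ℤ) ≤ (A:ℤ) := Int.natCast_nonneg A
  have hAl : (0:ℤ) ≤ 2*(A:ℤ)*l := by positivity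
  have e1 : C (t + 2*((A:ℤ)+k)*l) N = 0 := by
    apply C_zero_big
    · nlinarith
    · obtain ⟨d, hd⟩ := hpar
      exact ⟨d + t + A*l + k*l, by linarith⟩
  have e2 : C (t - 2*((A:ℤ)+k+2)*l + 2) N = 0 := by
    apply C_zero_small
    · nlinarith
    · obtain ⟨d, hd⟩ := hpar
      exact ⟨d + t + 1 - A*l - k*l - 2*l, by linarith⟩
  rw [e1, e2]
  ring

lemma T2_stab (hl : 2 ≤ l) {t : ℤ} (ht1 : 2*(l:ℤ) - 1 ≤ t) (w : ℕ → ℤ)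
    {N : ℕ} (hpar : (2:ℤ) ∣ (N:ℤ) - t) {b : ℕ} (hb : N + 1 ≤ b) :
    T2 l A w t N b = T2 l A w t N (N+1) := by
  unfold T2
  symm
  apply Finset.sum_subset (Finset.range_subset_range.2 (by omega))
  intro j hj hj'
  simp only [Finset.mem_range] at hj hj'
  have hjN : N + 1 ≤ j := by omega
  have hll : (2:ℤ) ≤ (l:ℤ) := by exact_mod_cast hl
  have hA : (0:ℤ) ≤ (A:ℤ) := Int.natCast_nonneg A
  have hAl : (0:ℤ) ≤ 2*(A:ℤ)*l := by positivity
  have hj2 : (2:ℤ)*(N+1) ≤ 2*j := by exact_mod_cast (by omega : 2*(N+1) ≤ 2*j)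
  have e1 : C (t + 2*(A:ℤ)*l + 2*j) N = 0 := by
    apply C_zero_big
    · linarith
    · obtain ⟨d, hd⟩ := hpar
      exact ⟨d + t + A*l + j, by linarith⟩
  rw [e1]
  ring

end filters
section grec
open Finset
variable {l A : ℕ}

lemma par_shift {X N' a : ℤ} (e : ℤ) (h : (2:ℤ) ∣ X) (ha : N' + a = X + 2*e) :
    (2:ℤ) ∣ N' + a := by obtain ⟨d, hd⟩ := h; exact ⟨d+e, by omega⟩

lemma G_zero (hl : 2 ≤ l) {t : ℤ} (hpar : (2:ℤ) ∣ (0:ℤ) - t) :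
    G l A 0 t = if t = -2*(A:ℤ)*l then 1 else 0 := by
  have hll : (2:ℤ) ≤ (l:ℤ) := by exact_mod_cast hl
  have hA : (0:ℤ) ≤ (A:ℤ) := Int.natCast_nonneg A
  have hAl : (0:ℤ) ≤ 2*(A:ℤ)*l := by positivity
  obtain ⟨d, hd⟩ := hpar
  by_cases h1 : t ≤ (l:ℤ) - 2
  · unfold G
    rw [if_pos h1]
    have e2 : C (2*((l:ℤ)-1) - t + 2*(A:ℤ)*l) 0 = 0 := by
      apply C_zero_big (by push_cast; linarith)
      exact ⟨d + ((l:ℤ) - 1) + A*l, by push_cast; linarith⟩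
    rw [e2, sub_zero]
    by_cases h3 : t = -2*(A:ℤ)*l
    · rw [if_pos h3, h3]
      have : -2*(A:ℤ)*l + 2*(A:ℤ)*l = 0 := by ring
      rw [this, C_zero_self]
    · rw [if_neg h3]
      apply C_zero' (by intro hc; apply h3; linarith)
      exact ⟨-d + A*l, by linarith⟩
  · have ht : (l:ℤ) - 1 ≤ t := by omega
    have h3 : ¬ t = -2*(A:ℤ)*l := by intro hc; rw [hc] at ht; linarith
    rw [if_neg h3]
    unfold G
    rw [if_neg h1]
    by_cases h2 : t ≤ 2*(l:ℤ) - 2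
    · rw [if_pos h2]
      unfold T1
      apply Finset.sum_eq_zero
      intro k hk
      have hk0 : (0:ℤ) ≤ (k:ℤ) := Int.natCast_nonneg k
      have e1 : C (t + 2*((A:ℤ)+k)*l) 0 = 0 := by
        apply C_zero_big (by push_cast; nlinarith)
        exact ⟨-d + A*l + k*l, by push_cast; linarith⟩
      have e2 : C (t - 2*((A:ℤ)+k+2)*l + 2) 0 = 0 := by
        apply C_zero_small (by push_cast; nlinarith)
        exact ⟨-d - A*l - k*l - 2*(l:ℤ) + 1, by push_cast; linarith⟩
      rw [e1, e2]; ring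
    · have hw : ∀ w : ℕ → ℤ, T2 l A w t 0 1 = 0 := by
        intro w
        unfold T2
        apply Finset.sum_eq_zero
        intro j hj
        have hj0 : (0:ℤ) ≤ (j:ℤ) := Int.natCast_nonneg j
        have e1 : C (t + 2*(A:ℤ)*l + 2*j) 0 = 0 := by
          apply C_zero_big (by push_cast; nlinarith)
          exact ⟨-d + A*l + (j:ℤ), by push_cast; linarith⟩
        rw [e1]; ring
      rw [if_neg h2]
      by_cases h4 : t = 2*(l:ℤ) - 1
      · rw [if_pos h4]; exact hw _
      · rw [if_neg h4]; exact hw _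

end grec
section hardcases
open Finset
variable {l A : ℕ}

lemma telescopeC (lz m : ℤ) (b : ℕ) (N : ℕ) :
    ∑ k ∈ range b, (-1:ℤ)^k * (C (m + 2*(k:ℤ)*lz) N + C (m + 2*((k:ℤ)+1)*lz) N)
      = C m N - (-1:ℤ)^b * C (m + 2*(b:ℤ)*lz) N := by
  induction b with
  | zero => simp
  | succ b ih =>
    rw [Finset.sum_range_succ, ih]
    push_cast
    ring_nf

lemma gcor_sum (hl : 2 ≤ l) {N : ℕ} {dd : ℤ} (hNd : (N:ℤ) = 2*dd + 2*(l:ℤ) - 2) :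
    C (2*(l:ℤ)-2+2*(A:ℤ)*(l:ℤ)) N
      + ∑ j ∈ range (N+1), gcor l (j+1) * C (2*(l:ℤ)+2*(A:ℤ)*(l:ℤ)+2*(j:ℤ)) N
      = T1 l A (2*(l:ℤ)-2) N (N+1) := by
  have hll : (2:ℤ) ≤ (l:ℤ) := by exact_mod_cast hl
  have hA : (0:ℤ) ≤ (A:ℤ) := Int.natCast_nonneg A
  have hAl : (0:ℤ) ≤ 2*(A:ℤ)*l := by positivity
  -- extend the sum to range ((N+1)*l)
  have hext : ∑ j ∈ range (N+1), gcor l (j+1) * C (2*(l:ℤ)+2*(A:ℤ)*(l:ℤ)+2*(j:ℤ)) N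
      = ∑ j ∈ range ((N+1)*l), gcor l (j+1) * C (2*(l:ℤ)+2*(A:ℤ)*(l:ℤ)+2*(j:ℤ)) N := by
    apply Finset.sum_subset
    · apply Finset.range_subset_range.2
      calc N+1 = (N+1)*1 := by ring
      _ ≤ (N+1)*l := Nat.mul_le_mul_left _ (by omega)
    · intro j hj hj'
      simp only [Finset.mem_range] at hj hj'
      have hj2 : (2:ℤ)*(N+1) ≤ 2*(j:ℤ) := by exact_mod_cast (by omega : 2*(N+1) ≤ 2*j)
      have e0 : C (2*(l:ℤ)+2*(A:ℤ)*(l:ℤ)+2*(j:ℤ)) N = 0 := by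
        apply C_zero_big (by linarith)
        exact ⟨dd+2*l-1+A*l+(j:ℤ), by linear_combination hNd⟩
      rw [e0, mul_zero]
  rw [hext]
  -- split gcor
  have hsplit : ∑ j ∈ range ((N+1)*l), gcor l (j+1) * C (2*(l:ℤ)+2*(A:ℤ)*(l:ℤ)+2*(j:ℤ)) N
      = (∑ j ∈ range ((N+1)*l), (if l ∣ (j+1) then (-1:ℤ)^((j+1)/l) else 0) * C (2*(l:ℤ)+2*(A:ℤ)*(l:ℤ)+2*(j:ℤ)) N)
        - ∑ j ∈ range ((N+1)*l), (if l ∣ j then (-1:ℤ)^(j/l) else 0) * C (2*(l:ℤ)+2*(A:ℤ)*(l:ℤ)+2*(j:ℤ)) N := by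
    rw [← Finset.sum_sub_distrib]
    refine Finset.sum_congr rfl (fun j hj => ?_)
    unfold gcor
    rw [Nat.add_sub_cancel]
    ring
  rw [hsplit]
  have hra := sum_dvd_reindex' l (by omega) (N+1) (fun j => C (2*(l:ℤ)+2*(A:ℤ)*(l:ℤ)+2*(j:ℤ)) N)
  have hrb := sum_dvd_reindex l (by omega) (N+1) (fun j => C (2*(l:ℤ)+2*(A:ℤ)*(l:ℤ)+2*(j:ℤ)) N)
  rw [hra, hrb]
  -- convert S_a terms
  have conv1 : ∑ k ∈ range (N+1), (-1:ℤ)^(k+1) * C (2*(l:ℤ)+2*(A:ℤ)*(l:ℤ)+2*(((k+1)*l-1 : ℕ):ℤ)) N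
      = ∑ k ∈ range (N+1), (-1:ℤ)^(k+1) * C (2*(l:ℤ)-2+2*(A:ℤ)*(l:ℤ)+2*((k:ℤ)+1)*(l:ℤ)) N := by
    refine Finset.sum_congr rfl (fun k hk => ?_)
    have h1 : 1 ≤ (k+1)*l := by
      have : 1*1 ≤ (k+1)*l := Nat.mul_le_mul (by omega) (by omega)
      omega
    rw [Nat.cast_sub h1]
    push_cast
    ring_nf
  rw [conv1]
  -- convert S_b terms
  have conv2 : ∑ k ∈ range (N+1), (-1:ℤ)^k * C (2*(l:ℤ)+2*(A:ℤ)*(l:ℤ)+2*((k*l : ℕ):ℤ)) N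
      = ∑ k ∈ range (N+1), (-1:ℤ)^k * C (2*(l:ℤ)+2*(A:ℤ)*(l:ℤ)+2*((k:ℤ)*(l:ℤ))) N := by
    refine Finset.sum_congr rfl (fun k hk => ?_)
    push_cast
    ring_nf
  rw [conv2]
  -- prepend: C(2l-2+2Al) + Σ_{k<N+1} (-1)^{k+1} C(2l-2+2Al+2(k+1)l) = Σ_{k<N+2} (-1)^k C(2l-2+2Al+2kl)
  have hpre : ∑ k ∈ range (N+2), (-1:ℤ)^k * C (2*(l:ℤ)-2+2*(A:ℤ)*(l:ℤ)+2*(k:ℤ)*(l:ℤ)) N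
      = (∑ k ∈ range (N+1), (-1:ℤ)^(k+1) * C (2*(l:ℤ)-2+2*(A:ℤ)*(l:ℤ)+2*((k:ℤ)+1)*(l:ℤ)) N)
        + C (2*(l:ℤ)-2+2*(A:ℤ)*(l:ℤ)) N := by
    rw [Finset.sum_range_succ']
    have t1 : ∑ k ∈ range (N+1), (-1:ℤ)^(k+1) * C (2*(l:ℤ)-2+2*(A:ℤ)*(l:ℤ)+2*((k+1 : ℕ):ℤ)*(l:ℤ)) N
        = ∑ k ∈ range (N+1), (-1:ℤ)^(k+1) * C (2*(l:ℤ)-2+2*(A:ℤ)*(l:ℤ)+2*((k:ℤ)+1)*(l:ℤ)) N := by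
      refine Finset.sum_congr rfl (fun k hk => ?_)
      push_cast
      ring_nf
    rw [t1]
    norm_num
  -- shrink range (N+2) to (N+1)
  have hshrink : ∑ k ∈ range (N+2), (-1:ℤ)^k * C (2*(l:ℤ)-2+2*(A:ℤ)*(l:ℤ)+2*(k:ℤ)*(l:ℤ)) N
      = ∑ k ∈ range (N+1), (-1:ℤ)^k * C (2*(l:ℤ)-2+2*(A:ℤ)*(l:ℤ)+2*(k:ℤ)*(l:ℤ)) N := by
    rw [Finset.sum_range_succ]
    have hNl : (2:ℤ)*((N:ℤ)+1) ≤ 2*((N:ℤ)+1)*l := by nlinarith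
    have e0 : C (2*(l:ℤ)-2+2*(A:ℤ)*(l:ℤ)+2*((N+1 : ℕ):ℤ)*(l:ℤ)) N = 0 := by
      apply C_zero_big (by push_cast; push_cast at hNl; linarith)
      exact ⟨dd+2*l-2+A*l+((N:ℤ)+1)*l, by push_cast; linear_combination hNd⟩
    push_cast at e0 ⊢
    rw [e0, mul_zero, add_zero]
  have hT : T1 l A (2*(l:ℤ)-2) N (N+1)
      = (∑ k ∈ range (N+1), (-1:ℤ)^k * C (2*(l:ℤ)-2+2*(A:ℤ)*(l:ℤ)+2*(k:ℤ)*(l:ℤ)) N)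
        - ∑ k ∈ range (N+1), (-1:ℤ)^k * C (2*(l:ℤ)+2*(A:ℤ)*(l:ℤ)+2*((k:ℤ)*(l:ℤ))) N := by
    unfold T1
    rw [← Finset.sum_sub_distrib]
    refine Finset.sum_congr rfl (fun k hk => ?_)
    have e : C (2*(l:ℤ)-2 - 2*((A:ℤ)+(k:ℤ)+2)*(l:ℤ) + 2) N
        = C (2*(l:ℤ)+2*(A:ℤ)*(l:ℤ)+2*((k:ℤ)*(l:ℤ))) N := by
      rw [show 2*(l:ℤ)-2 - 2*((A:ℤ)+(k:ℤ)+2)*(l:ℤ) + 2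
          = -(2*(l:ℤ)+2*(A:ℤ)*(l:ℤ)+2*((k:ℤ)*(l:ℤ))) from by ring]
      exact C_symm N ⟨dd+2*l-1+A*l+(k:ℤ)*l, by linear_combination hNd⟩
    rw [e]
    ring_nf
  rw [hT]
  linarith [hpre, hshrink]

end hardcases
section gsucc
open Finset
variable {l A : ℕ}

lemma vseq_succ (l j : ℕ) : vseq l (j+1) = 3 * vseq l j + gcor l (j+1) := rfl

lemma G_succ (hl : 2 ≤ l) {N : ℕ} {t : ℤ} (hpar : (2:ℤ) ∣ ((N:ℤ)+1) - t) :
    G l A (N+1) t =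
      (if t - 1 = 2*(l:ℤ) - 1 then 2 else 1) * G l A N (t-1) +
      (if (t+1 = (l:ℤ) - 1 ∨ t+1 = 2*(l:ℤ) - 1) then 0
        else if (t+1 = (l:ℤ) ∨ t+1 = 2*(l:ℤ)) then 2 else 1) * G l A N (t+1) := by
  have hll : (2:ℤ) ≤ (l:ℤ) := by exact_mod_cast hl
  have hA : (0:ℤ) ≤ (A:ℤ) := Int.natCast_nonneg A
  have hAl : (0:ℤ) ≤ 2*(A:ℤ)*l := by positivity
  obtain ⟨d, hd⟩ := hpar
  by_cases hc1 : t ≤ (l:ℤ) - 3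
  · -- deep left region
    rw [if_neg (by omega), if_neg (by omega), if_neg (by omega), one_mul, one_mul]
    unfold G
    rw [if_pos (by omega), if_pos (by omega), if_pos (by omega)]
    rw [C_pascal ⟨d+t+A*l, by push_cast; linarith⟩,
        C_pascal ⟨d+l-1+A*l, by push_cast; linarith⟩]
    ring_nf
  by_cases hc2 : t = (l:ℤ) - 2
  · subst hc2
    rw [if_neg (by omega), if_pos (by omega), one_mul, zero_mul, add_zero]
    unfold G
    rw [if_pos (by omega), if_pos (by omega)]
    rw [C_pascal ⟨d+l-2+A*l, by push_cast; linarith⟩,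
        C_pascal ⟨d+l-1+A*l, by push_cast; linarith⟩]
    ring_nf
  by_cases hc3 : t = (l:ℤ) - 1
  · subst hc3
    rw [if_neg (by omega), if_neg (by omega), if_pos (by omega), one_mul]
    unfold G
    rw [if_neg (by omega), if_pos (by omega), if_pos (by omega), if_neg (by omega),
        if_pos (by omega)]
    rw [T1_stab hl (by omega) (by omega) ⟨d-1, by linear_combination hd⟩
        (by omega : N+1 ≤ N+2) |>.symm]
    rw [show N+1+1 = N+2 from rfl]
    unfold T1
    have key : ∀ k ∈ range (N+2),
        (-1:ℤ)^k * (C ((l:ℤ)-1 + 2*((A:ℤ)+(k:ℤ))*(l:ℤ)) (N+1)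
          - C ((l:ℤ)-1 - 2*((A:ℤ)+(k:ℤ)+2)*(l:ℤ) + 2) (N+1))
        = (((-1:ℤ)^k * (C ((l:ℤ)-2+2*(A:ℤ)*(l:ℤ) + 2*(k:ℤ)*(l:ℤ)) N
              + C ((l:ℤ)-2+2*(A:ℤ)*(l:ℤ) + 2*((k:ℤ)+1)*(l:ℤ)) N)
           - (-1:ℤ)^k * (C ((l:ℤ)+2*(A:ℤ)*(l:ℤ) + 2*(k:ℤ)*(l:ℤ)) N
              + C ((l:ℤ)+2*(A:ℤ)*(l:ℤ) + 2*((k:ℤ)+1)*(l:ℤ)) N)))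
          + 2 * ((-1:ℤ)^k * (C ((l:ℤ)-1+1 + 2*((A:ℤ)+(k:ℤ))*(l:ℤ)) N
              - C ((l:ℤ)-1+1 - 2*((A:ℤ)+(k:ℤ)+2)*(l:ℤ) + 2) N)) := by
      intro k hk
      rw [C_pascal ⟨d+l-1+A*l+(k:ℤ)*l, by push_cast; linear_combination hd⟩,
          C_pascal ⟨d-l-A*l-(k:ℤ)*l, by push_cast; linear_combination hd⟩]
      have e1 : C ((l:ℤ)-1 - 2*((A:ℤ)+(k:ℤ)+2)*(l:ℤ) + 2 - 1) N
          = C ((l:ℤ)+2*(A:ℤ)*(l:ℤ) + 2*((k:ℤ)+1)*(l:ℤ)) N := by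
        rw [show (l:ℤ)-1 - 2*((A:ℤ)+(k:ℤ)+2)*(l:ℤ) + 2 - 1
            = -((l:ℤ)+2*(A:ℤ)*(l:ℤ) + 2*((k:ℤ)+1)*(l:ℤ)) from by ring]
        exact C_symm N ⟨d+l-1+A*l+((k:ℤ)+1)*l, by push_cast; linear_combination hd⟩
      have e2 : C ((l:ℤ)-1 - 2*((A:ℤ)+(k:ℤ)+2)*(l:ℤ) + 2 + 1) N
          = C ((l:ℤ)-2+2*(A:ℤ)*(l:ℤ) + 2*((k:ℤ)+1)*(l:ℤ)) N := by
        rw [show (l:ℤ)-1 - 2*((A:ℤ)+(k:ℤ)+2)*(l:ℤ) + 2 + 1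
            = -((l:ℤ)-2+2*(A:ℤ)*(l:ℤ) + 2*((k:ℤ)+1)*(l:ℤ)) from by ring]
        exact C_symm N ⟨d+l-2+A*l+((k:ℤ)+1)*l, by push_cast; linear_combination hd⟩
      have e3 : C ((l:ℤ)-1+1 - 2*((A:ℤ)+(k:ℤ)+2)*(l:ℤ) + 2) N
          = C ((l:ℤ)-2+2*(A:ℤ)*(l:ℤ) + 2*((k:ℤ)+1)*(l:ℤ)) N := by
        rw [show (l:ℤ)-1+1 - 2*((A:ℤ)+(k:ℤ)+2)*(l:ℤ) + 2
            = -((l:ℤ)-2+2*(A:ℤ)*(l:ℤ) + 2*((k:ℤ)+1)*(l:ℤ)) from by ring]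
        exact C_symm N ⟨d+l-2+A*l+((k:ℤ)+1)*l, by push_cast; linear_combination hd⟩
      rw [e1, e2, e3]
      ring_nf
    rw [Finset.sum_congr rfl key, Finset.sum_add_distrib, Finset.sum_sub_distrib,
        ← Finset.mul_sum, telescopeC, telescopeC]
    have hx : (0:ℤ) ≤ ((N:ℤ)+2)*((l:ℤ)-2) := mul_nonneg (by linarith) (by linarith)
    have hv1 : C ((l:ℤ)-2+2*(A:ℤ)*(l:ℤ) + 2*((N+2:ℕ):ℤ)*(l:ℤ)) N = 0 := by
      apply C_zero_big (by push_cast; nlinarith)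
      exact ⟨d+l-2+A*l+((N:ℤ)+2)*l, by push_cast; linear_combination hd⟩
    have hv2 : C ((l:ℤ)+2*(A:ℤ)*(l:ℤ) + 2*((N+2:ℕ):ℤ)*(l:ℤ)) N = 0 := by
      apply C_zero_big (by push_cast; nlinarith)
      exact ⟨d+l-1+A*l+((N:ℤ)+2)*l, by push_cast; linear_combination hd⟩
    rw [hv1, hv2]
    ring_nf
  by_cases hc4 : t ≤ 2*(l:ℤ) - 3
  · -- interior middle: l ≤ t ≤ 2l-3
    have htl : (l:ℤ) ≤ t := by omega
    rw [if_neg (by omega), if_neg (by omega), if_neg (by omega), one_mul, one_mul]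
    unfold G
    rw [if_neg (by omega), if_pos (by omega), if_neg (by omega), if_pos (by omega),
        if_neg (by omega), if_pos (by omega)]
    rw [T1_stab hl (by omega) (by omega) ⟨d, by push_cast; linarith⟩ (by omega : N+1 ≤ N+2) |>.symm,
        T1_stab hl (by omega) (by omega) ⟨d-1, by push_cast; linarith⟩ (by omega : N+1 ≤ N+2) |>.symm]
    unfold T1
    rw [← Finset.sum_add_distrib]
    refine Finset.sum_congr rfl (fun k hk => ?_)
    rw [C_pascal ⟨d+t+A*l+k*l, by push_cast; linarith⟩,
        C_pascal ⟨d+t+1-A*l-k*l-2*l, by push_cast; linarith⟩]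
    ring_nf
  by_cases hc5 : t = 2*(l:ℤ) - 2
  · subst hc5
    rw [if_neg (by omega), if_pos (by omega), one_mul, zero_mul, add_zero]
    unfold G
    rw [if_neg (by omega), if_pos (by omega), if_neg (by omega), if_pos (by omega)]
    rw [T1_stab hl (by omega) (by omega) ⟨d, by push_cast; linarith⟩ (by omega : N+1 ≤ N+2) |>.symm]
    unfold T1
    refine Finset.sum_congr rfl (fun k hk => ?_)
    rw [C_pascal ⟨d+2*l-2+A*l+k*l, by push_cast; linarith⟩,
        C_pascal ⟨d+2*l-1-A*l-k*l-2*l, by push_cast; linarith⟩]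
    have e : C (2*(l:ℤ) - 2 - 2*((A:ℤ)+k+2)*l + 2 + 1) N = C (2*(l:ℤ) - 2 + 2*((A:ℤ)+k)*l + 1) N := by
      rw [show 2*(l:ℤ) - 2 - 2*((A:ℤ)+k+2)*l + 2 + 1 = -(2*(l:ℤ) - 2 + 2*((A:ℤ)+k)*l + 1) by ring]
      exact C_symm N ⟨d+2*l-2+A*l+k*l, by push_cast; linarith⟩
    rw [e]
    ring_nf
  by_cases hc6 : t = 2*(l:ℤ) - 1
  · subst hc6
    rw [if_neg (by omega), if_neg (by omega), if_pos (by omega), one_mul]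
    unfold G
    rw [if_neg (by omega), if_neg (by omega), if_pos (by omega : 2*(l:ℤ)-1 = 2*(l:ℤ)-1),
        if_neg (by omega), if_pos (by omega),
        if_neg (by omega), if_neg (by omega), if_neg (by omega)]
    rw [show 2*(l:ℤ)-1-1 = 2*(l:ℤ)-2 from by ring]
    have hNd : (N:ℤ) = 2*d + 2*(l:ℤ) - 2 := by linarith
    have hT2L : T2 l A (vseq l) (2*(l:ℤ)-1) (N+1) (N+1+1)
        = ∑ j ∈ range (N+2), vseq l j * C (2*(l:ℤ)-1 + 2*(A:ℤ)*(l:ℤ) + 2*(j:ℤ)) (N+1) := rfl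
    have hT2R : T2 l A (fun j => 2 * vseq l j) (2*(l:ℤ)-1+1) N (N+1)
        = 2 * ∑ j ∈ range (N+1), vseq l j * C (2*(l:ℤ) + 2*(A:ℤ)*(l:ℤ) + 2*(j:ℤ)) N := by
      unfold T2
      rw [Finset.mul_sum]
      refine Finset.sum_congr rfl (fun j hj => ?_)
      simp only []
      rw [show 2*(l:ℤ)-1+1 + 2*(A:ℤ)*(l:ℤ) + 2*(j:ℤ)
          = 2*(l:ℤ) + 2*(A:ℤ)*(l:ℤ) + 2*(j:ℤ) from by ring]
      ring
    rw [hT2L, hT2R]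
    have step1 : ∑ j ∈ range (N+2), vseq l j * C (2*(l:ℤ)-1 + 2*(A:ℤ)*(l:ℤ) + 2*(j:ℤ)) (N+1)
        = (∑ j ∈ range (N+2), vseq l j * C (2*(l:ℤ)-2 + 2*(A:ℤ)*(l:ℤ) + 2*(j:ℤ)) N)
          + ∑ j ∈ range (N+2), vseq l j * C (2*(l:ℤ) + 2*(A:ℤ)*(l:ℤ) + 2*(j:ℤ)) N := by
      rw [← Finset.sum_add_distrib]
      refine Finset.sum_congr rfl (fun j hj => ?_)
      rw [C_pascal ⟨d+2*l-1+A*l+(j:ℤ), by push_cast; linear_combination hd⟩]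
      ring_nf
    have step2 : ∑ j ∈ range (N+2), vseq l j * C (2*(l:ℤ)-2 + 2*(A:ℤ)*(l:ℤ) + 2*(j:ℤ)) N
        = (3 * ∑ j ∈ range (N+1), vseq l j * C (2*(l:ℤ) + 2*(A:ℤ)*(l:ℤ) + 2*(j:ℤ)) N
           + ∑ j ∈ range (N+1), gcor l (j+1) * C (2*(l:ℤ)+2*(A:ℤ)*(l:ℤ)+2*(j:ℤ)) N)
          + C (2*(l:ℤ)-2+2*(A:ℤ)*(l:ℤ)) N := by
      rw [Finset.sum_range_succ']
      congr 1
      · rw [Finset.mul_sum, ← Finset.sum_add_distrib]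
        refine Finset.sum_congr rfl (fun j hj => ?_)
        rw [vseq_succ]
        have e : C (2*(l:ℤ)-2 + 2*(A:ℤ)*(l:ℤ) + 2*((j+1 : ℕ):ℤ)) N
            = C (2*(l:ℤ) + 2*(A:ℤ)*(l:ℤ) + 2*(j:ℤ)) N := by
          rw [show (((j+1 : ℕ)):ℤ) = (j:ℤ)+1 from by push_cast; ring,
              show 2*(l:ℤ)-2 + 2*(A:ℤ)*(l:ℤ) + 2*((j:ℤ)+1)
                = 2*(l:ℤ) + 2*(A:ℤ)*(l:ℤ) + 2*(j:ℤ) from by ring]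
        rw [e]
        ring
      · have h0 : vseq l 0 = 1 := rfl
        rw [h0]
        norm_num
    have step3 : ∑ j ∈ range (N+2), vseq l j * C (2*(l:ℤ) + 2*(A:ℤ)*(l:ℤ) + 2*(j:ℤ)) N
        = ∑ j ∈ range (N+1), vseq l j * C (2*(l:ℤ) + 2*(A:ℤ)*(l:ℤ) + 2*(j:ℤ)) N := by
      rw [Finset.sum_range_succ]
      have e0 : C (2*(l:ℤ) + 2*(A:ℤ)*(l:ℤ) + 2*((N+1 : ℕ):ℤ)) N = 0 := by
        apply C_zero_big (by push_cast; linarith)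
        exact ⟨d+2*l+A*l+(N:ℤ), by push_cast; linear_combination hd⟩
      rw [e0, mul_zero, add_zero]
    rw [step1, step2, step3]
    have hg := gcor_sum (A := A) hl (dd := d) hNd
    linarith [hg]
  by_cases hc7 : t = 2*(l:ℤ)
  · subst hc7
    rw [if_pos (by omega), if_neg (by omega), if_neg (by omega), one_mul]
    unfold G
    rw [if_neg (by omega), if_neg (by omega), if_neg (by omega),
        if_neg (by omega), if_neg (by omega), if_pos (by omega : 2*(l:ℤ) - 1 = 2*(l:ℤ) - 1),
        if_neg (by omega), if_neg (by omega), if_neg (by omega)]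
    rw [T2_stab hl (by omega) _ ⟨d, by push_cast; linarith⟩ (by omega : N+1 ≤ N+2) |>.symm,
        T2_stab hl (by omega) _ ⟨d-1, by push_cast; linarith⟩ (by omega : N+1 ≤ N+2) |>.symm]
    unfold T2
    rw [Finset.mul_sum, ← Finset.sum_add_distrib]
    refine Finset.sum_congr rfl (fun j hj => ?_)
    rw [C_pascal ⟨d+2*l+A*l+j, by push_cast; linarith⟩]
    ring_nf
  · -- t ≥ 2l+1
    have htl : 2*(l:ℤ) + 1 ≤ t := by omega
    rw [if_neg (by omega), if_neg (by omega), if_neg (by omega), one_mul, one_mul]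
    unfold G
    rw [if_neg (by omega), if_neg (by omega), if_neg (by omega),
        if_neg (by omega), if_neg (by omega), if_neg (by omega),
        if_neg (by omega), if_neg (by omega), if_neg (by omega)]
    rw [T2_stab hl (by omega) _ ⟨d, by push_cast; linarith⟩ (by omega : N+1 ≤ N+2) |>.symm,
        T2_stab hl (by omega) _ ⟨d-1, by push_cast; linarith⟩ (by omega : N+1 ≤ N+2) |>.symm]
    unfold T2
    rw [← Finset.sum_add_distrib]
    refine Finset.sum_congr rfl (fun j hj => ?_)
    rw [C_pascal ⟨d+t+A*l+j, by push_cast; linarith⟩]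
    ring_nf

end gsucc
section paths
open Finset

def wtf (l : ℕ) : ℤ → Bool → ℤ := fun x b =>
  if (x = (l : ℤ) ∧ b = false) ∨ (x = 2 * (l : ℤ) - 1 ∧ b = true) ∨
      (x = 2 * (l : ℤ) ∧ b = false) then 2 else 1

open Classical in
noncomputable def Fa (l : ℕ) (x0 : ℤ) (N : ℕ) (t : ℤ) : ℤ :=
  ∑ s : Fin N → Bool, if (x0 + pathPos s N = t
      ∧ (∀ i : Fin N, x0 + pathPos s i.val = (l:ℤ) - 1 → s i = true)
      ∧ (∀ i : Fin N, x0 + pathPos s i.val = 2*(l:ℤ) - 1 → s i = true))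
    then pathWeightFrom x0 (wtf l) s else 0

lemma pathPos_snoc {N : ℕ} (s : Fin N → Bool) (b : Bool) (k : ℕ) (hk : k ≤ N) :
    pathPos (Fin.snoc s b) k = pathPos s k := by
  unfold pathPos
  rw [Finset.sum_filter, Finset.sum_filter, Fin.sum_univ_castSucc]
  simp only [Fin.coe_castSucc, Fin.val_last, Fin.snoc_castSucc]
  rw [if_neg (by omega)]
  rw [add_zero]

lemma pathPos_top {N : ℕ} (s : Fin N → Bool) (b : Bool) :
    pathPos (Fin.snoc s b) (N+1) = pathPos s N + (if b then 1 else -1) := by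
  unfold pathPos
  rw [Finset.sum_filter, Finset.sum_filter, Fin.sum_univ_castSucc]
  simp only [Fin.coe_castSucc, Fin.val_last, Fin.snoc_castSucc, Fin.snoc_last]
  rw [if_pos (by omega)]
  congr 1
  refine Finset.sum_congr rfl (fun i _ => ?_)
  have hi := i.isLt
  rw [if_pos (show (i:ℕ) < N+1 by omega), if_pos (show (i:ℕ) < N from hi)]

lemma weight_snoc {N : ℕ} (x0 : ℤ) (w : ℤ → Bool → ℤ) (s : Fin N → Bool) (b : Bool) :
    pathWeightFrom x0 w (Fin.snoc s b)
      = pathWeightFrom x0 w s * w (x0 + pathPos s N) b := by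
  unfold pathWeightFrom
  rw [Fin.prod_univ_castSucc]
  simp only [Fin.coe_castSucc, Fin.val_last, Fin.snoc_castSucc, Fin.snoc_last]
  congr 1
  · refine Finset.prod_congr rfl (fun i _ => ?_)
    rw [pathPos_snoc s b i.val (le_of_lt i.isLt)]
  · rw [pathPos_snoc s b N le_rfl]

lemma forall_snoc {N : ℕ} (s : Fin N → Bool) (b : Bool) (c x0 : ℤ) :
    (∀ i : Fin (N+1), x0 + pathPos (Fin.snoc s b) i.val = c → (Fin.snoc (α := fun _ => Bool) s b) i = true)
      ↔ ((∀ i : Fin N, x0 + pathPos s i.val = c → s i = true)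
          ∧ (x0 + pathPos s N = c → b = true)) := by
  constructor
  · intro h
    refine ⟨fun i hi => ?_, fun hc => ?_⟩
    · have h2 := h i.castSucc (by
        rw [Fin.coe_castSucc, pathPos_snoc s b i.val (le_of_lt i.isLt)]; exact hi)
      rwa [Fin.snoc_castSucc] at h2
    · have h2 := h (Fin.last N) (by
        rw [Fin.val_last, pathPos_snoc s b N le_rfl]; exact hc)
      rwa [Fin.snoc_last] at h2
  · rintro ⟨h1, h2⟩ i hi
    rcases Fin.eq_castSucc_or_eq_last i with ⟨j, rfl⟩ | rfl
    · rw [Fin.snoc_castSucc]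
      apply h1
      rwa [Fin.coe_castSucc, pathPos_snoc s b j.val (le_of_lt j.isLt)] at hi
    · rw [Fin.snoc_last]
      apply h2
      rwa [Fin.val_last, pathPos_snoc s b N le_rfl] at hi

lemma Fa_zero (l : ℕ) (x0 t : ℤ) : Fa l x0 0 t = if t = x0 then 1 else 0 := by
  unfold Fa
  have key : ∀ s : Fin 0 → Bool, (if (x0 + pathPos s 0 = t
      ∧ (∀ i : Fin 0, x0 + pathPos s i.val = (l:ℤ) - 1 → s i = true)
      ∧ (∀ i : Fin 0, x0 + pathPos s i.val = 2*(l:ℤ) - 1 → s i = true))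
    then pathWeightFrom x0 (wtf l) s else 0) = (if t = x0 then (1:ℤ) else 0) := by
    intro s
    have hp : pathPos s 0 = 0 := by unfold pathPos; simp
    have hw : pathWeightFrom x0 (wtf l) s = 1 := by unfold pathWeightFrom; simp
    rw [hp, hw, add_zero]
    by_cases h : x0 = t
    · rw [if_pos ⟨h, fun i => i.elim0, fun i => i.elim0⟩, if_pos h.symm]
    · rw [if_neg (by tauto), if_neg (by tauto)]
  calc (∑ s : Fin 0 → Bool, _) = ∑ _s : Fin 0 → Bool, (if t = x0 then (1:ℤ) else 0) :=
        Finset.sum_congr rfl (fun s _ => key s)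
    _ = (if t = x0 then 1 else 0) := by simp

lemma Fa_succ (l : ℕ) (x0 t : ℤ) (N : ℕ) :
    Fa l x0 (N+1) t = (if t - 1 = 2*(l:ℤ) - 1 then 2 else 1) * Fa l x0 N (t-1)
      + (if (t+1 = (l:ℤ) - 1 ∨ t+1 = 2*(l:ℤ) - 1) then 0
         else if (t+1 = (l:ℤ) ∨ t+1 = 2*(l:ℤ)) then 2 else 1) * Fa l x0 N (t+1) := by
  classical
  unfold Fa
  rw [← Equiv.sum_comp (Fin.snocEquiv (fun _ => Bool))]
  rw [Fintype.sum_prod_type, Fintype.sum_bool]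
  congr 1
  · -- b = true branch
    rw [Finset.mul_sum]
    refine Finset.sum_congr rfl (fun s _ => ?_)
    have hs : ((Fin.snocEquiv (fun _ : Fin (N+1) => Bool)) (true, s)) = Fin.snoc s true := by
      funext x; simp [Fin.snocEquiv_apply]
    rw [hs]
    by_cases hc : (x0 + pathPos s N = t - 1
        ∧ (∀ i : Fin N, x0 + pathPos s i.val = (l:ℤ) - 1 → s i = true)
        ∧ (∀ i : Fin N, x0 + pathPos s i.val = 2*(l:ℤ) - 1 → s i = true))
    · rw [if_pos, if_pos hc, weight_snoc]
      · rw [hc.1]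
        have hwt : wtf l (t - 1) true = (if t - 1 = 2*(l:ℤ) - 1 then 2 else 1) := by
          unfold wtf
          by_cases h2 : t - 1 = 2*(l:ℤ) - 1
          · rw [if_pos (by tauto), if_pos h2]
          · rw [if_neg (by simp [h2]), if_neg h2]
        rw [hwt]
        ring
      · refine ⟨?_, ?_, ?_⟩
        · rw [pathPos_top, show (if true then (1:ℤ) else -1) = 1 from rfl]
          have h1 := hc.1
          omega
        · rw [forall_snoc]
          exact ⟨hc.2.1, fun _ => rfl⟩
        · rw [forall_snoc]
          exact ⟨hc.2.2, fun _ => rfl⟩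
    · rw [if_neg, if_neg hc, mul_zero]
      intro hfull
      apply hc
      obtain ⟨h1, h2, h3⟩ := hfull
      rw [forall_snoc] at h2 h3
      refine ⟨?_, h2.1, h3.1⟩
      rw [pathPos_top, show (if true then (1:ℤ) else -1) = 1 from rfl] at h1
      omega
  · -- b = false branch
    by_cases hforb : (t+1 = (l:ℤ) - 1 ∨ t+1 = 2*(l:ℤ) - 1)
    · rw [if_pos hforb, zero_mul]
      apply Finset.sum_eq_zero
      intro s _
      have hs : ((Fin.snocEquiv (fun _ : Fin (N+1) => Bool)) (false, s)) = Fin.snoc s false := by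
        funext x; simp [Fin.snocEquiv_apply]
      rw [hs, if_neg]
      intro hfull
      obtain ⟨h1, h2, h3⟩ := hfull
      rw [forall_snoc] at h2 h3
      rw [pathPos_top, show (if false then (1:ℤ) else -1) = -1 from rfl] at h1
      have hpos : x0 + pathPos s N = t + 1 := by omega
      rcases hforb with h | h
      · exact absurd (h2.2 (by omega)) (by simp)
      · exact absurd (h3.2 (by omega)) (by simp)
    · rw [if_neg hforb, Finset.mul_sum]
      refine Finset.sum_congr rfl (fun s _ => ?_)
      have hs : ((Fin.snocEquiv (fun _ : Fin (N+1) => Bool)) (false, s)) = Fin.snoc s false := by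
        funext x; simp [Fin.snocEquiv_apply]
      rw [hs]
      by_cases hc : (x0 + pathPos s N = t + 1
          ∧ (∀ i : Fin N, x0 + pathPos s i.val = (l:ℤ) - 1 → s i = true)
          ∧ (∀ i : Fin N, x0 + pathPos s i.val = 2*(l:ℤ) - 1 → s i = true))
      · rw [if_pos, if_pos hc, weight_snoc]
        · rw [hc.1]
          have hwt : wtf l (t + 1) false = (if (t+1 = (l:ℤ) ∨ t+1 = 2*(l:ℤ)) then 2 else 1) := by
            unfold wtf
            by_cases h2 : (t+1 = (l:ℤ) ∨ t+1 = 2*(l:ℤ))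
            · rw [if_pos (by tauto), if_pos h2]
            · push_neg at h2
              rw [if_neg (by simp [h2.1, h2.2]), if_neg (by tauto)]
          rw [hwt]
          ring
        · refine ⟨?_, ?_, ?_⟩
          · rw [pathPos_top, show (if false then (1:ℤ) else -1) = -1 from rfl]
            have h1 := hc.1
            omega
          · rw [forall_snoc]
            exact ⟨hc.2.1, fun h => absurd hc.1 (by omega)⟩
          · rw [forall_snoc]
            exact ⟨hc.2.2, fun h => absurd hc.1 (by omega)⟩
      · rw [if_neg, if_neg hc, mul_zero]
        intro hfull
        apply hc
        obtain ⟨h1, h2, h3⟩ := hfull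
        rw [forall_snoc] at h2 h3
        refine ⟨?_, h2.1, h3.1⟩
        rw [pathPos_top, show (if false then (1:ℤ) else -1) = -1 from rfl] at h1
        omega

end paths
section assemble
open Finset
variable {l A : ℕ}

lemma Fa_eq_G (hl : 2 ≤ l) :
    ∀ (N : ℕ) (t : ℤ), (2:ℤ) ∣ (N:ℤ) - t → Fa l (-2*(A:ℤ)*l) N t = G l A N t := by
  intro N
  induction N with
  | zero =>
    intro t hpar
    rw [Fa_zero, G_zero hl (by push_cast at hpar ⊢; omega)]
  | succ N ih =>
    intro t hpar
    push_cast at hpar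
    rw [Fa_succ, G_succ hl (by omega),
        ih (t-1) (by omega), ih (t+1) (by omega)]

lemma T1_eq_rhs (hl : 2 ≤ l) {M : ℤ} (hM1 : (l:ℤ) - 1 ≤ M) (hM2 : M ≤ 2*(l:ℤ) - 2)
    {N : ℕ} (hpar : (2:ℤ) ∣ (N:ℤ) - M) :
    T1 l A M N (N+1) =
      (∑ k ∈ Finset.Icc (A : ℤ) (Int.fdiv ((N : ℤ) - l + 1) (2 * l)),
        (-1 : ℤ) ^ (k - A).toNat * C (M + 2 * k * l) N) +
      ∑ k ∈ Finset.Icc (A : ℤ) (Int.fdiv (N : ℤ) (2 * l) - 1),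
        (-1 : ℤ) ^ (k - A + 1).toNat * C (M - 2 * (k + 2) * l + 2) N := by
  have hll : (2:ℤ) ≤ (l:ℤ) := by exact_mod_cast hl
  have hA : (0:ℤ) ≤ (A:ℤ) := Int.natCast_nonneg A
  have hlpos : (0:ℤ) < 2*(l:ℤ) := by linarith
  obtain ⟨d, hd⟩ := hpar
  have hfd1 : Int.fdiv ((N:ℤ) - l + 1) (2*l) = ((N:ℤ) - l + 1) / (2*l) :=
    Int.fdiv_eq_ediv_of_nonneg _ (by linarith)
  have hfd2 : Int.fdiv (N:ℤ) (2*l) = (N:ℤ) / (2*l) := Int.fdiv_eq_ediv_of_nonneg _ (by linarith)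
  rw [hfd1, hfd2]
  unfold T1
  rw [show (∑ k ∈ range (N+1), (-1:ℤ)^k *
      (C (M + 2*((A:ℤ)+k)*l) N - C (M - 2*((A:ℤ)+k+2)*l + 2) N))
    = (∑ k ∈ range (N+1), (-1:ℤ)^k * C (M + 2*((A:ℤ)+k)*l) N)
      + ∑ k ∈ range (N+1), -((-1:ℤ)^k * C (M - 2*((A:ℤ)+k+2)*l + 2) N) from by
    rw [← Finset.sum_add_distrib]; exact Finset.sum_congr rfl (fun k _ => by ring)]
  congr 1
  · -- sum 1
    have hre : ∑ k ∈ range (N+1), (-1:ℤ)^k * C (M + 2*((A:ℤ)+k)*l) N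
        = ∑ k ∈ Finset.Icc (A:ℤ) ((A:ℤ)+N), (-1:ℤ)^(k-A).toNat * C (M + 2*k*l) N := by
      refine Finset.sum_nbij' (fun k => (A:ℤ)+k) (fun k => (k - A).toNat) ?_ ?_ ?_ ?_ ?_
      · intro a ha; simp only [Finset.mem_range] at ha; simp only [Finset.mem_Icc]; omega
      · intro a ha; simp only [Finset.mem_Icc] at ha; simp only [Finset.mem_range]; omega
      · intro a ha; omega
      · intro a ha; simp only [Finset.mem_Icc] at ha; omega
      · intro a ha
        rw [show ((A:ℤ) + a - A).toNat = a by omega]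
    rw [hre]
    symm
    apply Finset.sum_subset
    · apply Finset.Icc_subset_Icc_right
      calc ((N:ℤ) - l + 1) / (2*l) ≤ (N:ℤ) / (2*l) := Int.ediv_le_ediv hlpos (by linarith)
        _ ≤ (N:ℤ) := Int.ediv_le_self _ (Int.natCast_nonneg N)
        _ ≤ (A:ℤ) + N := by linarith
    · intro k hk hk'
      simp only [Finset.mem_Icc] at hk hk'
      have hkgt : ((N:ℤ) - l + 1) / (2*l) + 1 ≤ k := by omega
      have hlt := Int.lt_ediv_add_one_mul_self ((N:ℤ) - l + 1) hlpos
      have hmul : (((N:ℤ) - l + 1) / (2*l) + 1) * (2*l) ≤ k * (2*l) :=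
        mul_le_mul_of_nonneg_right hkgt (by linarith)
      have hbig : C (M + 2*k*l) N = 0 := by
        apply C_zero_big (by nlinarith)
        exact ⟨M + d + k*l, by linear_combination hd⟩
      rw [hbig, mul_zero]
  · -- sum 2
    have hre : ∑ k ∈ range (N+1), -((-1:ℤ)^k * C (M - 2*((A:ℤ)+k+2)*l + 2) N)
        = ∑ k ∈ Finset.Icc (A:ℤ) ((A:ℤ)+N), (-1:ℤ)^(k-A+1).toNat * C (M - 2*(k+2)*l + 2) N := by
      refine Finset.sum_nbij' (fun k => (A:ℤ)+k) (fun k => (k - A).toNat) ?_ ?_ ?_ ?_ ?_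
      · intro a ha; simp only [Finset.mem_range] at ha; simp only [Finset.mem_Icc]; omega
      · intro a ha; simp only [Finset.mem_Icc] at ha; simp only [Finset.mem_range]; omega
      · intro a ha; omega
      · intro a ha; simp only [Finset.mem_Icc] at ha; omega
      · intro a ha
        rw [show ((A:ℤ) + a - A + 1).toNat = a + 1 by omega, pow_succ]
        ring_nf
    rw [hre]
    symm
    apply Finset.sum_subset
    · apply Finset.Icc_subset_Icc_right
      calc (N:ℤ) / (2*l) - 1 ≤ (N:ℤ) / (2*l) := by linarith
        _ ≤ (N:ℤ) := Int.ediv_le_self _ (Int.natCast_nonneg N)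
        _ ≤ (A:ℤ) + N := by linarith
    · intro k hk hk'
      simp only [Finset.mem_Icc] at hk hk'
      have hkgt : (N:ℤ) / (2*l) ≤ k := by omega
      have hlt := Int.lt_ediv_add_one_mul_self (N:ℤ) hlpos
      have hmul : ((N:ℤ)/(2*l) + 1) * (2*l) ≤ (k+1) * (2*l) :=
        mul_le_mul_of_nonneg_right (by omega) (by linarith)
      have hbig : C (M - 2*(k+2)*l + 2) N = 0 := by
        apply C_zero_small (by nlinarith)
        exact ⟨M + d - (k+2)*l + 1, by linear_combination hd⟩
      rw [hbig, mul_zero]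

end assemble

open Finset in
/-- For `l ≥ 2`, `A ≥ 0` and `l-1 ≤ M < 2l-1`, the weighted number of lattice paths from
`(-2Al,0)` to `(M,N)` with a type-1 filter at `x = l-1` and a type-2 filter at `x = 2l-1` equals
`Σ_{k=A}^{⌊(N-l+1)/(2l)⌋} (-1)^{k-A} C (M+2kl) N
  + Σ_{k=A}^{⌊N/(2l)-1⌋} (-1)^{k-A+1} C (M-2(k+2)l+2) N`. -/
theorem two_filters_shifted_weighted_count (l M N A : ℕ) (hl : 2 ≤ l)
    (hM1 : l - 1 ≤ M) (hM2 : M < 2 * l - 1) (h2 : N % 2 = M % 2) :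
    (∑ᶠ s ∈ {s : Fin N → Bool |
        -2 * (A : ℤ) * l + pathPos s N = M ∧
        (∀ i : Fin N, -2 * (A : ℤ) * l + pathPos s i.val = (l : ℤ) - 1 → s i = true) ∧
        (∀ i : Fin N, -2 * (A : ℤ) * l + pathPos s i.val = 2 * (l : ℤ) - 1 → s i = true)},
      pathWeightFrom (-2 * (A : ℤ) * l) (fun x b =>
        if (x = (l : ℤ) ∧ b = false) ∨ (x = 2 * (l : ℤ) - 1 ∧ b = true) ∨
            (x = 2 * (l : ℤ) ∧ b = false) then 2 else 1) s) =
      (∑ k ∈ Finset.Icc (A : ℤ) (Int.fdiv ((N : ℤ) - l + 1) (2 * l)),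
        (-1 : ℤ) ^ (k - A).toNat * C ((M : ℤ) + 2 * k * l) N) +
      ∑ k ∈ Finset.Icc (A : ℤ) (Int.fdiv (N : ℤ) (2 * l) - 1),
        (-1 : ℤ) ^ (k - A + 1).toNat * C ((M : ℤ) - 2 * (k + 2) * l + 2) N := by
  classical
  have hM1' : (l:ℤ) - 1 ≤ (M:ℤ) := by push_cast; omega
  have hM2' : (M:ℤ) ≤ 2*(l:ℤ) - 2 := by push_cast; omega
  have hpar : (2:ℤ) ∣ (N:ℤ) - M := by omega
  have hstep1 : (∑ᶠ s ∈ {s : Fin N → Bool |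
        -2 * (A : ℤ) * l + pathPos s N = M ∧
        (∀ i : Fin N, -2 * (A : ℤ) * l + pathPos s i.val = (l : ℤ) - 1 → s i = true) ∧
        (∀ i : Fin N, -2 * (A : ℤ) * l + pathPos s i.val = 2 * (l : ℤ) - 1 → s i = true)},
      pathWeightFrom (-2 * (A : ℤ) * l) (fun x b =>
        if (x = (l : ℤ) ∧ b = false) ∨ (x = 2 * (l : ℤ) - 1 ∧ b = true) ∨
            (x = 2 * (l : ℤ) ∧ b = false) then 2 else 1) s)
      = Fa l (-2*(A:ℤ)*l) N M := by
    have hset : {s : Fin N → Bool |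
        -2 * (A : ℤ) * l + pathPos s N = M ∧
        (∀ i : Fin N, -2 * (A : ℤ) * l + pathPos s i.val = (l : ℤ) - 1 → s i = true) ∧
        (∀ i : Fin N, -2 * (A : ℤ) * l + pathPos s i.val = 2 * (l : ℤ) - 1 → s i = true)}
      = ↑(Finset.univ.filter (fun s : Fin N → Bool =>
          (-2 * (A : ℤ) * l + pathPos s N = M ∧
          (∀ i : Fin N, -2 * (A : ℤ) * l + pathPos s i.val = (l : ℤ) - 1 → s i = true) ∧
          (∀ i : Fin N, -2 * (A : ℤ) * l + pathPos s i.val = 2 * (l : ℤ) - 1 → s i = true)))) := by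
      ext s
      simp
    rw [hset, finsum_mem_coe_finset, Finset.sum_filter]
    unfold Fa
    rfl
  rw [hstep1, Fa_eq_G hl N M hpar]
  have hG : G l A N (M:ℤ) = T1 l A M N (N+1) := by
    unfold G
    rw [if_neg (by push_neg; linarith), if_pos (by linarith)]
  rw [hG, T1_eq_rhs hl hM1' hM2' hpar]
end

section
/- For all integers k ≥ 0 and j ≥ 2, the pair (P_j, Q_j) defined by the recurrences P_{j+1}(k) = Σ_{n=0}^k P_j(n) + Σ_{n=0}^{k-1} Q_j(n) and Q_{j+1}(k) = Σ_{n=0}^k P_j(n) + Σ_{n=0}^k Q_j(n), with initial conditions P_2(k)=1, Q_2(k)=0, has the closed form P_j(k) = Σ_{i=0}^{⌊j/2⌋} binom(j-2,2i)·binom(k-i+j-2,j-2) and Q_j(k) = Σ_{i=0}^{⌊j/2⌋} binom(j-2,2i+1)·binom(k-i+j-2,j-2). -/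
open Finset

/-- Binomial coefficient `binom a b` of integers, equal to `0` when `a < 0`, `b < 0`
or `b > a`. -/
def B (a b : ℤ) : ℤ :=
  if 0 ≤ a ∧ 0 ≤ b then (a.toNat.choose b.toNat : ℤ) else 0

/-- `P_j(k) = Σ_{i=0}^{⌊j/2⌋} binom(j-2, 2i) · binom(k-i+j-2, j-2)`. -/
def P (j : ℕ) (k : ℤ) : ℤ :=
  ∑ i ∈ Finset.range (j / 2 + 1),
    B ((j : ℤ) - 2) (2 * i) * B (k - i + j - 2) ((j : ℤ) - 2)

/-- `Q_j(k) = Σ_{i=0}^{⌊j/2⌋} binom(j-2, 2i+1) · binom(k-i+j-2, j-2)`. -/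
def Q (j : ℕ) (k : ℤ) : ℤ :=
  ∑ i ∈ Finset.range (j / 2 + 1),
    B ((j : ℤ) - 2) (2 * i + 1) * B (k - i + j - 2) ((j : ℤ) - 2)

lemma B_nat (m n : ℕ) : B (m : ℤ) (n : ℤ) = (m.choose n : ℤ) := by
  simp [B]

lemma B_zero_right (a : ℤ) (ha : 0 ≤ a) : B a 0 = 1 := by
  simp [B, ha]

lemma B_eq_zero_of_lt {a b : ℤ} (h : a < b) : B a b = 0 := by
  simp only [B]
  split_ifs with h1
  · rw [Nat.choose_eq_zero_of_lt (by omega)]; rfl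
  · rfl

lemma B_pascal (a : ℤ) (b : ℕ) :
    B (a + 1) ((b : ℤ) + 1) = B a (b : ℤ) + B a ((b : ℤ) + 1) := by
  by_cases ha : 0 ≤ a
  · simp only [B, if_pos (by constructor <;> omega : 0 ≤ a + 1 ∧ 0 ≤ (b:ℤ) + 1),
      if_pos (by constructor <;> omega : 0 ≤ a ∧ 0 ≤ (b:ℤ)),
      if_pos (by constructor <;> omega : 0 ≤ a ∧ 0 ≤ (b:ℤ) + 1)]
    have h1 : (a + 1).toNat = a.toNat + 1 := by omega
    have h2 : ((b : ℤ) + 1).toNat = b + 1 := by omega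
    have h3 : ((b : ℤ)).toNat = b := by omega
    rw [h1, h2, h3, Nat.choose_succ_succ]
    push_cast; ring
  · simp only [B, if_neg (by omega : ¬ (0 ≤ a ∧ 0 ≤ (b:ℤ))),
      if_neg (by omega : ¬ (0 ≤ a ∧ 0 ≤ (b:ℤ) + 1))]
    split_ifs with h
    · have h1 : (a + 1).toNat = 0 := by omega
      rw [h1, Nat.choose_eq_zero_of_lt (by omega)]
      simp
    · simp

lemma Icc_int_succ (k : ℤ) (hk : -1 ≤ k) :
    Finset.Icc (0 : ℤ) (k + 1) = insert (k + 1) (Finset.Icc 0 k) := by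
  ext x
  simp only [Finset.mem_Icc, Finset.mem_insert]
  omega

lemma hockey (m : ℕ) (c : ℤ) (hc : c ≤ m) :
    ∀ k : ℤ, -1 ≤ k →
      (∑ n ∈ Finset.Icc (0 : ℤ) k, B (n + c) m) = B (k + c + 1) ((m : ℤ) + 1) := by
  refine Int.le_induction ?_ ?_
  · rw [Finset.Icc_eq_empty (by omega), Finset.sum_empty,
      show (-1 : ℤ) + c + 1 = c by ring]
    exact (B_eq_zero_of_lt (by omega)).symm
  · intro k hk ih
    rw [Icc_int_succ k hk, Finset.sum_insert (by simp), ih,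
      show k + 1 + c + 1 = (k + c + 1) + 1 by ring, B_pascal (k + c + 1) m,
      show k + 1 + c = k + c + 1 by ring]

/-- Auxiliary closed form with a uniform summation range. -/
def Pa (m : ℕ) (k : ℤ) : ℤ :=
  ∑ i ∈ Finset.range (m + 1), (m.choose (2 * i) : ℤ) * B (k - i + m) (m : ℤ)

def Qa (m : ℕ) (k : ℤ) : ℤ :=
  ∑ i ∈ Finset.range (m + 1), (m.choose (2 * i + 1) : ℤ) * B (k - i + m) (m : ℤ)

lemma sum_range_eq_of_vanish (f : ℕ → ℤ) (N M : ℕ)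
    (h : ∀ i, min N M ≤ i → f i = 0) :
    ∑ i ∈ Finset.range N, f i = ∑ i ∈ Finset.range M, f i := by
  have h1 : ∀ L : ℕ, min N M ≤ L →
      ∑ i ∈ Finset.range L, f i = ∑ i ∈ Finset.range (min N M), f i := by
    intro L hL
    refine (Finset.sum_subset (Finset.range_subset_range.2 hL) ?_).symm
    intro x hx hx'
    simp only [Finset.mem_range, not_lt] at hx'
    exact h x (by omega)
  rw [h1 N (min_le_left _ _), h1 M (min_le_right _ _)]

lemma P_eq_Pa (m : ℕ) (k : ℤ) : P (m + 2) k = Pa m k := by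
  have hterm : ∀ i : ℕ,
      B (((m + 2 : ℕ) : ℤ) - 2) (2 * (i : ℤ)) * B (k - i + ((m + 2 : ℕ) : ℤ) - 2) (((m + 2 : ℕ) : ℤ) - 2)
        = (m.choose (2 * i) : ℤ) * B (k - i + m) (m : ℤ) := by
    intro i
    have e1 : ((m + 2 : ℕ) : ℤ) - 2 = (m : ℤ) := by push_cast; ring
    have e2 : (2 : ℤ) * (i : ℤ) = ((2 * i : ℕ) : ℤ) := by push_cast; ring
    have e3 : k - i + ((m + 2 : ℕ) : ℤ) - 2 = k - i + m := by push_cast; ring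
    rw [e1, e2, e3, B_nat]
  simp only [P, hterm]
  apply sum_range_eq_of_vanish
  intro i hi
  have : m < 2 * i := by omega
  rw [Nat.choose_eq_zero_of_lt this]
  simp

lemma Q_eq_Qa (m : ℕ) (k : ℤ) : Q (m + 2) k = Qa m k := by
  have hterm : ∀ i : ℕ,
      B (((m + 2 : ℕ) : ℤ) - 2) (2 * (i : ℤ) + 1) * B (k - i + ((m + 2 : ℕ) : ℤ) - 2) (((m + 2 : ℕ) : ℤ) - 2)
        = (m.choose (2 * i + 1) : ℤ) * B (k - i + m) (m : ℤ) := by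
    intro i
    have e1 : ((m + 2 : ℕ) : ℤ) - 2 = (m : ℤ) := by push_cast; ring
    have e2 : (2 : ℤ) * (i : ℤ) + 1 = ((2 * i + 1 : ℕ) : ℤ) := by push_cast; ring
    have e3 : k - i + ((m + 2 : ℕ) : ℤ) - 2 = k - i + m := by push_cast; ring
    rw [e1, e2, e3, B_nat]
  simp only [Q, hterm]
  apply sum_range_eq_of_vanish
  intro i hi
  have : m < 2 * i + 1 := by omega
  rw [Nat.choose_eq_zero_of_lt this]
  simp

lemma sum_Pa (m : ℕ) (k : ℤ) (hk : -1 ≤ k) :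
    ∑ n ∈ Finset.Icc (0 : ℤ) k, Pa m n
      = ∑ i ∈ Finset.range (m + 1),
          (m.choose (2 * i) : ℤ) * B (k - i + m + 1) ((m : ℤ) + 1) := by
  unfold Pa
  rw [Finset.sum_comm]
  refine Finset.sum_congr rfl fun i _ => ?_
  rw [← Finset.mul_sum]
  congr 1
  have := hockey m ((m : ℤ) - i) (by omega) k hk
  calc ∑ n ∈ Finset.Icc (0 : ℤ) k, B (n - i + m) (m : ℤ)
      = ∑ n ∈ Finset.Icc (0 : ℤ) k, B (n + ((m : ℤ) - i)) (m : ℤ) := by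
        refine Finset.sum_congr rfl fun n _ => ?_
        rw [show n - (i:ℤ) + m = n + ((m:ℤ) - i) by ring]
    _ = B (k + ((m : ℤ) - i) + 1) ((m : ℤ) + 1) := this
    _ = B (k - i + m + 1) ((m : ℤ) + 1) := by rw [show k + ((m:ℤ) - i) + 1 = k - i + m + 1 by ring]

lemma sum_Qa (m : ℕ) (k : ℤ) (hk : -1 ≤ k) :
    ∑ n ∈ Finset.Icc (0 : ℤ) k, Qa m n
      = ∑ i ∈ Finset.range (m + 1),
          (m.choose (2 * i + 1) : ℤ) * B (k - i + m + 1) ((m : ℤ) + 1) := by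
  unfold Qa
  rw [Finset.sum_comm]
  refine Finset.sum_congr rfl fun i _ => ?_
  rw [← Finset.mul_sum]
  congr 1
  have := hockey m ((m : ℤ) - i) (by omega) k hk
  calc ∑ n ∈ Finset.Icc (0 : ℤ) k, B (n - i + m) (m : ℤ)
      = ∑ n ∈ Finset.Icc (0 : ℤ) k, B (n + ((m : ℤ) - i)) (m : ℤ) := by
        refine Finset.sum_congr rfl fun n _ => ?_
        rw [show n - (i:ℤ) + m = n + ((m:ℤ) - i) by ring]
    _ = B (k + ((m : ℤ) - i) + 1) ((m : ℤ) + 1) := this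
    _ = B (k - i + m + 1) ((m : ℤ) + 1) := by rw [show k + ((m:ℤ) - i) + 1 = k - i + m + 1 by ring]

lemma Pa_rec (m : ℕ) (k : ℤ) (hk : 0 ≤ k) :
    Pa (m + 1) k = (∑ n ∈ Finset.Icc (0 : ℤ) k, Pa m n)
      + ∑ n ∈ Finset.Icc (0 : ℤ) (k - 1), Qa m n := by
  rw [sum_Pa m k (by omega), sum_Qa m (k - 1) (by omega)]
  set g : ℕ → ℤ := fun i => B (k - i + m + 1) ((m : ℤ) + 1) with hg
  have hg2 : ∀ i : ℕ, B (k - 1 - i + m + 1) ((m : ℤ) + 1) = g (i + 1) := by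
    intro i
    simp only [hg]
    congr 1
    push_cast; ring
  have hPa : Pa (m + 1) k = ∑ i ∈ Finset.range (m + 2), ((m+1).choose (2 * i) : ℤ) * g i := by
    unfold Pa
    refine Finset.sum_congr rfl fun i _ => ?_
    simp only [hg]
    congr 2
    push_cast; ring
  rw [hPa]
  simp only [hg2]
  rw [Finset.sum_range_succ' (fun i => ((m+1).choose (2 * i) : ℤ) * g i) (m + 1)]
  have hsplit : ∀ i : ℕ, ((m+1).choose (2 * (i+1)) : ℤ) * g (i+1)
      = (m.choose (2*i+1) : ℤ) * g (i+1) + (m.choose (2*i+2) : ℤ) * g (i+1) := by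
    intro i
    have : (m+1).choose (2 * (i+1)) = m.choose (2*i+1) + m.choose (2*i+2) := by
      rw [show 2 * (i+1) = (2*i+1) + 1 by ring, Nat.choose_succ_succ]
    rw [this]; push_cast; ring
  rw [Finset.sum_congr rfl (fun i _ => hsplit i), Finset.sum_add_distrib]
  have key : (∑ i ∈ Finset.range (m+1), (m.choose (2*i+2) : ℤ) * g (i+1))
      + ((m+1).choose (2 * 0) : ℤ) * g 0
      = ∑ i ∈ Finset.range (m+1), (m.choose (2*i) : ℤ) * g i := by
    rw [Finset.sum_range_succ' (fun i => (m.choose (2*i) : ℤ) * g i) m,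
      Finset.sum_range_succ (fun i => (m.choose (2*i+2) : ℤ) * g (i+1)) m,
      Nat.choose_eq_zero_of_lt (show m < 2*m+2 by omega)]
    simp only [show ∀ i : ℕ, 2 * (i+1) = 2*i+2 from fun i => by ring, Nat.cast_zero,
      zero_mul, add_zero, mul_zero, Nat.mul_zero, Nat.choose_zero_right, Nat.cast_one, one_mul]
  rw [← key]
  ring

lemma Qa_rec (m : ℕ) (k : ℤ) (hk : 0 ≤ k) :
    Qa (m + 1) k = (∑ n ∈ Finset.Icc (0 : ℤ) k, Pa m n)
      + ∑ n ∈ Finset.Icc (0 : ℤ) k, Qa m n := by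
  rw [sum_Pa m k (by omega), sum_Qa m k (by omega)]
  set g : ℕ → ℤ := fun i => B (k - i + m + 1) ((m : ℤ) + 1) with hg
  have hQa : Qa (m + 1) k = ∑ i ∈ Finset.range (m + 2), ((m+1).choose (2 * i + 1) : ℤ) * g i := by
    unfold Qa
    refine Finset.sum_congr rfl fun i _ => ?_
    simp only [hg]
    congr 2
    push_cast; ring
  rw [hQa, Finset.sum_range_succ (fun i => ((m+1).choose (2 * i + 1) : ℤ) * g i) (m + 1)]
  rw [Nat.choose_eq_zero_of_lt (show m + 1 < 2*(m+1)+1 by omega)]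
  simp only [Nat.cast_zero, zero_mul, add_zero]
  have hsplit : ∀ i : ℕ, ((m+1).choose (2 * i + 1) : ℤ) * g i
      = (m.choose (2*i) : ℤ) * g i + (m.choose (2*i+1) : ℤ) * g i := by
    intro i
    rw [Nat.choose_succ_succ]
    push_cast; ring
  rw [Finset.sum_congr rfl (fun i _ => hsplit i), Finset.sum_add_distrib]

lemma Pa_base (k : ℤ) (hk : 0 ≤ k) : Pa 0 k = 1 := by
  simp [Pa, B_zero_right k hk]

lemma Qa_base (k : ℤ) (hk : 0 ≤ k) : Qa 0 k = 0 := by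
  simp [Qa]

/-- Any pair of functions satisfying the recurrences
`P'_{j+1}(k) = Σ_{n=0}^{k} P'_j(n) + Σ_{n=0}^{k-1} Q'_j(n)` and
`Q'_{j+1}(k) = Σ_{n=0}^{k} P'_j(n) + Σ_{n=0}^{k} Q'_j(n)` with the initial conditions
`P'_2(k) = 1`, `Q'_2(k) = 0` coincides with the closed forms `P_j(k)` and `Q_j(k)`. -/
theorem closed_form_of_recurrence (P' Q' : ℕ → ℤ → ℤ)
    (hinit : ∀ k : ℤ, 0 ≤ k → P' 2 k = 1 ∧ Q' 2 k = 0)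
    (hrec : ∀ j : ℕ, 2 ≤ j → ∀ k : ℤ, 0 ≤ k →
      P' (j + 1) k = (∑ n ∈ Finset.Icc (0 : ℤ) k, P' j n)
          + (∑ n ∈ Finset.Icc (0 : ℤ) (k - 1), Q' j n) ∧
      Q' (j + 1) k = (∑ n ∈ Finset.Icc (0 : ℤ) k, P' j n)
          + ∑ n ∈ Finset.Icc (0 : ℤ) k, Q' j n) :
    ∀ j : ℕ, 2 ≤ j → ∀ k : ℤ, 0 ≤ k → P' j k = P j k ∧ Q' j k = Q j k := by
  have main : ∀ m : ℕ, ∀ k : ℤ, 0 ≤ k → P' (m + 2) k = Pa m k ∧ Q' (m + 2) k = Qa m k := by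
    intro m
    induction m with
    | zero =>
      intro k hk
      rw [Pa_base k hk, Qa_base k hk]
      exact hinit k hk
    | succ m ih =>
      intro k hk
      obtain ⟨h1, h2⟩ := hrec (m + 2) (by omega) k hk
      have eP : ∀ x ∈ Finset.Icc (0 : ℤ) k, P' (m + 2) x = Pa m x := by
        intro x hx
        exact (ih x (by simp at hx; omega)).1
      have eQ : ∀ x ∈ Finset.Icc (0 : ℤ) k, Q' (m + 2) x = Qa m x := by
        intro x hx
        exact (ih x (by simp at hx; omega)).2
      have eQ' : ∀ x ∈ Finset.Icc (0 : ℤ) (k - 1), Q' (m + 2) x = Qa m x := by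
        intro x hx
        exact (ih x (by simp at hx; omega)).2
      constructor
      · rw [show m + 1 + 2 = (m + 2) + 1 by ring, h1,
          Finset.sum_congr rfl eP, Finset.sum_congr rfl eQ', ← Pa_rec m k hk]
      · rw [show m + 1 + 2 = (m + 2) + 1 by ring, h2,
          Finset.sum_congr rfl eP, Finset.sum_congr rfl eQ, ← Qa_rec m k hk]
  intro j hj k hk
  obtain ⟨m, rfl⟩ : ∃ m, j = m + 2 := ⟨j - 2, by omega⟩
  rw [P_eq_Pa, Q_eq_Qa]
  exact main m k hk
end
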